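/- arXiv:2005.04046 — 5 statements merged into one kernel-verified Lean document; each statement's English description precedes it below -/
import Mathlib

section
/- Let L = M ⊕ N be a Lie algebra that is a direct sum of ideals, acting on a module V. If V is a simple L-module and S is a proper nonzero simple M-submodule of V, then there exists n ∈ N such that the map s ↦ ns is an injective M-module homomorphism from S into NS. -/
/-!
Since `⁅N, M⁆ ⊆ M ∩ N = 0`, every `n ∈ N` acts on `V` by an `M`-module endomorphism. Some
`n ∈ N` must move `S`, for otherwise `S` would be a proper nonzero `L`-submodule of the
simple module `V`. For such an `n`, the kernel of `s ↦ n s` on `S` is an `M`-submodule of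
the simple `M`-module `S` other than `S`, hence zero.
-/

/-- A submodule `U` of `V` is invariant under the ideal `M` of `L`. -/
def LieIdealInvariant {K : Type} [Field K] {L : Type} [LieRing L] [LieAlgebra K L]
    {V : Type} [AddCommGroup V] [Module K V] [LieRingModule L V] [LieModule K L V]
    (M : LieIdeal K L) (U : Submodule K V) : Prop :=
  ∀ m ∈ M, ∀ u ∈ U, ⁅m, u⁆ ∈ U

section

variable {K L V : Type} [Field K] [LieRing L] [LieAlgebra K L] [AddCommGroup V] [LieRingModule L V]

theorem lie_lie_comm_of_disjoint {M N : LieIdeal K L} (hMN : Disjoint M N) {m n : L}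
    (hm : m ∈ M) (hn : n ∈ N) (v : V) : ⁅n, ⁅m, v⁆⁆ = ⁅m, ⁅n, v⁆⁆ := by
  have hnm : ⁅n, m⁆ ∈ M ⊓ N := ⟨M.lie_mem hm, lie_mem_left K L N n m hn⟩
  rw [hMN.eq_bot, LieSubmodule.mem_bot] at hnm
  rw [leibniz_lie, hnm, zero_lie, zero_add]

variable [Module K V] [LieModule K L V]

theorem LieIdealInvariant.lie_mem_of_codisjoint {M N : LieIdeal K L} (hMN : Codisjoint M N)
    {S : Submodule K V} (hM : LieIdealInvariant M S) (hN : LieIdealInvariant N S)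
    (x : L) {s : V} (hs : s ∈ S) : ⁅x, s⁆ ∈ S := by
  obtain ⟨m, hm, n, hn, rfl⟩ :=
    (LieSubmodule.mem_sup M N x).mp (hMN.eq_top ▸ LieSubmodule.mem_top x)
  rw [add_lie]
  exact S.add_mem (hM m hm s hs) (hN n hn s hs)

theorem LieIdealInvariant.inf_ker_toEnd {M : LieIdeal K L} {S : Submodule K V}
    (hS : LieIdealInvariant M S) {n : L} (hn : ∀ m ∈ M, ∀ v : V, ⁅n, ⁅m, v⁆⁆ = ⁅m, ⁅n, v⁆⁆) :
    LieIdealInvariant M (S ⊓ LinearMap.ker (LieModule.toEnd K L V n)) := by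
  intro m hm u hu
  obtain ⟨huS, huker⟩ := Submodule.mem_inf.mp hu
  refine Submodule.mem_inf.mpr ⟨hS m hm u huS, ?_⟩
  rw [LinearMap.mem_ker, LieModule.toEnd_apply_apply] at huker ⊢
  rw [hn m hm u, huker, lie_zero]

theorem inf_ker_toEnd_eq_bot_of_simple {M : LieIdeal K L} {S : Submodule K V}
    (hSinv : LieIdealInvariant M S)
    (hSsimple : ∀ U : Submodule K V, U ≤ S → LieIdealInvariant M U → U = ⊥ ∨ U = S)
    {n : L} (hn : ∀ m ∈ M, ∀ v : V, ⁅n, ⁅m, v⁆⁆ = ⁅m, ⁅n, v⁆⁆)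
    {s₀ : V} (hs₀ : s₀ ∈ S) (hns₀ : ⁅n, s₀⁆ ≠ 0) :
    S ⊓ LinearMap.ker (LieModule.toEnd K L V n) = ⊥ := by
  refine (hSsimple _ inf_le_left (hSinv.inf_ker_toEnd hn)).resolve_right fun hS => hns₀ ?_
  have : s₀ ∈ S ⊓ LinearMap.ker (LieModule.toEnd K L V n) := by rwa [hS]
  simpa using this.2

end

theorem embedding_into_NS_general
    {K : Type} [Field K] {L : Type} [LieRing L] [LieAlgebra K L]
    {V : Type} [AddCommGroup V] [Module K V]
    [LieRingModule L V] [LieModule K L V]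
    (M N : LieIdeal K L) (hMN : IsCompl M N)
    (hVsimple : ∀ U : Submodule K V, (∀ x : L, ∀ u ∈ U, ⁅x, u⁆ ∈ U) → U = ⊥ ∨ U = ⊤)
    (S : Submodule K V) (hSinv : LieIdealInvariant M S)
    (hSne : S ≠ ⊥) (hSproper : S ≠ ⊤)
    (hSsimple : ∀ U : Submodule K V, U ≤ S → LieIdealInvariant M U → U = ⊥ ∨ U = S) :
    let NS : Submodule K V := sInf {U : Submodule K V |
      LieIdealInvariant M U ∧ ∀ n ∈ N, ∀ s ∈ S, ⁅n, s⁆ ∈ U}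
    ∃ n ∈ N,
      (∀ s ∈ S, ⁅n, s⁆ ∈ NS) ∧
      (∀ s ∈ S, ⁅n, s⁆ = 0 → s = 0) ∧
      (∀ m ∈ M, ∀ s ∈ S, ⁅n, ⁅m, s⁆⁆ = ⁅m, (⁅n, s⁆ : V)⁆) := by
  intro NS
  obtain ⟨n, hn, s₀, hs₀, hns₀⟩ : ∃ n ∈ N, ∃ s₀ ∈ S, ⁅n, s₀⁆ ≠ 0 := by
    by_contra! hN
    have hSinvN : LieIdealInvariant N S := fun n hn s hs => hN n hn s hs ▸ S.zero_mem
    exact (hVsimple S fun x _ hs => hSinv.lie_mem_of_codisjoint hMN.codisjoint hSinvN x hs).elim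
      hSne hSproper
  have hcomm : ∀ m ∈ M, ∀ v : V, ⁅n, ⁅m, v⁆⁆ = ⁅m, ⁅n, v⁆⁆ := fun m hm =>
    lie_lie_comm_of_disjoint hMN.disjoint hm hn
  have hker := inf_ker_toEnd_eq_bot_of_simple hSinv hSsimple hcomm hs₀ hns₀
  refine ⟨n, hn, fun s hs => Submodule.mem_sInf.mpr fun U hU => hU.2 n hn s hs,
    fun s hs hs0 => ?_, fun m hm s _ => hcomm m hm s⟩
  have : s ∈ S ⊓ LinearMap.ker (LieModule.toEnd K L V n) := ⟨hs, by simpa using hs0⟩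
  simpa [hker] using this

/-- If `L = M ⊕ N` is a direct sum of ideals, `V` a simple `L`-module, and `S` a proper
nonzero simple `M`-submodule of `V`, then there is `n ∈ N` such that `s ↦ n s` is an
injective `M`-module homomorphism from `S` into `NS`. -/
theorem embedding_into_NS
    {K : Type} [Field K] {L : Type} [LieRing L] [LieAlgebra K L] [FiniteDimensional K L]
    {V : Type} [AddCommGroup V] [Module K V] [FiniteDimensional K V]
    [LieRingModule L V] [LieModule K L V]
    (M N : LieIdeal K L) (hMN : IsCompl M N)
    (hVnt : Nontrivial V)
    (hVsimple : ∀ U : Submodule K V, (∀ x : L, ∀ u ∈ U, ⁅x, u⁆ ∈ U) → U = ⊥ ∨ U = ⊤)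
    (S : Submodule K V) (hSinv : LieIdealInvariant M S)
    (hSne : S ≠ ⊥) (hSproper : S ≠ ⊤)
    (hSsimple : ∀ U : Submodule K V, U ≤ S → LieIdealInvariant M U → U = ⊥ ∨ U = S) :
    let NS : Submodule K V := sInf {U : Submodule K V |
      LieIdealInvariant M U ∧ ∀ n ∈ N, ∀ s ∈ S, ⁅n, s⁆ ∈ U}
    ∃ n ∈ N,
      (∀ s ∈ S, ⁅n, s⁆ ∈ NS) ∧
      (∀ s ∈ S, ⁅n, s⁆ = 0 → s = 0) ∧
      (∀ m ∈ M, ∀ s ∈ S, ⁅n, ⁅m, s⁆⁆ = ⁅m, (⁅n, s⁆ : V)⁆) :=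
  embedding_into_NS_general M N hMN hVsimple S hSinv hSne hSproper hSsimple
end

section
/- Let t : V₁ × ⋯ × Vₗ → K be a nondegenerate multilinear form with dim ⟦t⟧ = 1, where ⟦t⟧ = {s multilinear forms | Der(t) ⊆ Der(s)} is the densor space of t. If Der(t) is reductive (every Der(t)-submodule of each Vₐ has a Der(t)-invariant complement), then every Vₐ is a simple Der(t)-module. -/
/-!
Let `U ⊆ Vₐ` be `Der(t)`-invariant with invariant complement `W`, and let `p` be the projection
onto `U` along `W`. Then `p` commutes with every `δₐ`, so the form `s = t(…, p ·, …)` obtained by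
inserting `p` in slot `a` satisfies `Der(t) ⊆ Der(s)`. As `⟦t⟧` is spanned by `t`, `s = c t`, and
nondegeneracy of `t` turns this into `p = c • id`; hence `U = range p` is `0` or `Vₐ`.
-/

/-- The set of derivations of a multilinear form `t`. -/
def DerSet {K : Type} [Field K] {l : ℕ} {V : Fin l → Type}
    [∀ a, AddCommGroup (V a)] [∀ a, Module K (V a)]
    (t : MultilinearMap K V K) : Set (∀ a, Module.End K (V a)) :=
  {δ | ∀ v : ∀ a, V a, ∑ a, t (Function.update v a (δ a (v a))) = 0}

open Function Submodule

theorem MultilinearMap.nontrivial_of_ne_zero {R ι M₂ : Type*} {M₁ : ι → Type*} [Semiring R]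
    [∀ i, AddCommMonoid (M₁ i)] [AddCommMonoid M₂] [∀ i, Module R (M₁ i)] [Module R M₂]
    {f : MultilinearMap R M₁ M₂} (hf : f ≠ 0) (i : ι) : Nontrivial (M₁ i) := by
  by_contra h
  rw [not_nontrivial_iff_subsingleton] at h
  exact hf (MultilinearMap.ext fun v => f.map_coord_zero i (Subsingleton.elim _ _))

theorem Submodule.exists_smul_eq_of_finrank_eq_one {K M : Type*} [DivisionRing K]
    [AddCommGroup M] [Module K M] {P : Submodule K M} (hP : Module.finrank K P = 1)
    {x y : M} (hx : x ∈ P) (hx0 : x ≠ 0) (hy : y ∈ P) : ∃ c : K, c • x = y := by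
  obtain ⟨c, hc⟩ := (finrank_eq_one_iff_of_nonzero' (⟨x, hx⟩ : P) (by simpa using hx0)).mp hP
    ⟨y, hy⟩
  exact ⟨c, congrArg Subtype.val hc⟩

theorem Submodule.commute_projection {R E : Type*} [Ring R] [AddCommGroup E] [Module R E]
    {p q : Submodule R E} (hpq : IsCompl p q) {f : Module.End R E}
    (hp : p ∈ Module.End.invtSubmodule f) (hq : q ∈ Module.End.invtSubmodule f) :
    Commute (p.projection q hpq) f :=
  (LinearMap.IsIdempotentElem.commute_iff (isIdempotentElem_projection hpq)).mpr
    ⟨by rwa [range_projection], by rwa [ker_projection]⟩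

section Densor

variable {K : Type} [Field K] {l : ℕ} {V : Fin l → Type}
  [∀ a, AddCommGroup (V a)] [∀ a, Module K (V a)]

def densor (t : MultilinearMap K V K) : Submodule K (MultilinearMap K V K) :=
  span K {s | DerSet t ⊆ DerSet s}

theorem update_one_mem_derSet_zero (a : Fin l) :
    update (0 : ∀ b, Module.End K (V b)) a 1 ∈ DerSet (0 : MultilinearMap K V K) :=
  fun v => by simp

theorem eq_zero_of_update_one_mem_derSet {s : MultilinearMap K V K} {a : Fin l}
    (h : update (0 : ∀ b, Module.End K (V b)) a 1 ∈ DerSet s) : s = 0 := by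
  ext v
  have hv := h v
  rw [Finset.sum_eq_single a (fun b _ hb => by simp [update_of_ne hb])
    (fun ha => absurd (Finset.mem_univ a) ha)] at hv
  simpa using hv

theorem densor_zero (a : Fin l) : densor (0 : MultilinearMap K V K) = ⊥ :=
  span_eq_bot.mpr fun _ hs => eq_zero_of_update_one_mem_derSet (hs (update_one_mem_derSet_zero a))

theorem ne_zero_of_finrank_densor_eq_one {t : MultilinearMap K V K} (a : Fin l)
    (hdim : Module.finrank K (densor t) = 1) : t ≠ 0 := by
  rintro rfl
  rw [densor_zero a, finrank_bot] at hdim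
  exact zero_ne_one hdim

def compAt (t : MultilinearMap K V K) (a : Fin l) (p : Module.End K (V a)) :
    MultilinearMap K V K :=
  t.compLinearMap (update (fun _ => LinearMap.id) a p)

theorem compAt_apply (t : MultilinearMap K V K) (a : Fin l) (p : Module.End K (V a))
    (v : ∀ b, V b) : compAt t a p v = t (update v a (p (v a))) := by
  rw [compAt, MultilinearMap.compLinearMap_apply]
  congr 1
  funext b
  by_cases hb : b = a
  · subst hb; simp
  · simp [update_of_ne hb]

theorem mem_derSet_compAt {t : MultilinearMap K V K} {a : Fin l} {p : Module.End K (V a)}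
    {δ : ∀ b, Module.End K (V b)} (hδ : δ ∈ DerSet t) (hp : Commute p (δ a)) :
    δ ∈ DerSet (compAt t a p) := by
  intro v
  set w := update v a (p (v a))
  have hslot : ∀ b, compAt t a p (update v b (δ b (v b))) = t (update w b (δ b (w b))) := by
    intro b
    rw [compAt_apply]
    by_cases hb : b = a
    · subst hb
      simp only [w, update_idem, update_self, ← Module.End.mul_apply, hp.eq]
    · rw [update_of_ne (Ne.symm hb), show w b = v b from update_of_ne hb _ _, update_comm hb]
  simp only [hslot]
  exact hδ w

theorem eq_smul_id_of_compAt_eq_smul {t : MultilinearMap K V K} {a : Fin l}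
    (hnd : ∀ w : V a, (∀ v : ∀ b, V b, t (update v a w) = 0) → w = 0)
    {p : Module.End K (V a)} {c : K} (h : c • t = compAt t a p) : p = c • LinearMap.id := by
  ext w
  rw [← sub_eq_zero]
  apply hnd
  intro v
  have hv := congrArg (fun s : MultilinearMap K V K => s (update v a w)) h
  simp only [smul_apply, compAt_apply, update_idem, update_self] at hv
  rw [LinearMap.smul_apply, LinearMap.id_apply, t.map_update_sub, t.map_update_smul, hv, sub_self]

theorem eq_bot_or_eq_top_of_isCompl {t : MultilinearMap K V K} {a : Fin l}
    (hnd : ∀ w : V a, (∀ v : ∀ b, V b, t (update v a w) = 0) → w = 0)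
    (hdim : Module.finrank K (densor t) = 1) {U W : Submodule K (V a)} (hUW : IsCompl U W)
    (hU : ∀ δ ∈ DerSet t, ∀ u ∈ U, δ a u ∈ U) (hW : ∀ δ ∈ DerSet t, ∀ w ∈ W, δ a w ∈ W) :
    U = ⊥ ∨ U = ⊤ := by
  set p := U.projection W hUW
  have hcomm : ∀ δ ∈ DerSet t, Commute p (δ a) := fun δ hδ =>
    commute_projection hUW (hU δ hδ) (hW δ hδ)
  obtain ⟨c, hc⟩ := exists_smul_eq_of_finrank_eq_one hdim (subset_span fun _ hδ => hδ)
    (ne_zero_of_finrank_densor_eq_one a hdim)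
    (subset_span fun _ hδ => mem_derSet_compAt hδ (hcomm _ hδ))
  have hp : p = c • LinearMap.id := eq_smul_id_of_compAt_eq_smul hnd hc
  rw [← range_projection hUW]
  change LinearMap.range p = ⊥ ∨ LinearMap.range p = ⊤
  by_cases hc0 : c = 0
  · simp [hp, hc0]
  · simp [hp, LinearMap.range_smul _ _ hc0]

end Densor

theorem tiny_densor_simple_general
    {K : Type} [Field K] {l : ℕ} (V : Fin l → Type)
    [∀ a, AddCommGroup (V a)] [∀ a, Module K (V a)]
    (t : MultilinearMap K V K)
    -- nondegeneracy
    (hnd : ∀ (a : Fin l) (w : V a),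
      (∀ v : ∀ b, V b, t (Function.update v a w) = 0) → w = 0)
    -- the densor space is 1-dimensional
    (hdim : Module.finrank K
      (Submodule.span K {s : MultilinearMap K V K | DerSet t ⊆ DerSet s}) = 1)
    -- every `Der(t)`-submodule of each `Vₐ` has an invariant complement
    (hred : ∀ (a : Fin l) (U : Submodule K (V a)),
      (∀ δ ∈ DerSet t, ∀ u ∈ U, δ a u ∈ U) →
      ∃ W : Submodule K (V a), IsCompl U W ∧ ∀ δ ∈ DerSet t, ∀ w ∈ W, δ a w ∈ W) :
    ∀ a : Fin l, Nontrivial (V a) ∧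
      ∀ U : Submodule K (V a), (∀ δ ∈ DerSet t, ∀ u ∈ U, δ a u ∈ U) →
        U = ⊥ ∨ U = ⊤ := by
  intro a
  refine ⟨MultilinearMap.nontrivial_of_ne_zero (ne_zero_of_finrank_densor_eq_one a hdim) a, fun U hU => ?_⟩
  obtain ⟨W, hUW, hW⟩ := hred a U hU
  exact eq_bot_or_eq_top_of_isCompl (hnd a) hdim hUW hU hW

/-- If `t` is a nondegenerate multilinear form whose densor space
`⟦t⟧ = {s | Der(t) ⊆ Der(s)}` is 1-dimensional, and every `Der(t)`-submodule of each
`Vₐ` admits a `Der(t)`-invariant complement, then every `Vₐ` is a simple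
`Der(t)`-module. -/
theorem tiny_densor_simple
    {K : Type} [Field K] {l : ℕ} (V : Fin l → Type)
    [∀ a, AddCommGroup (V a)] [∀ a, Module K (V a)] [∀ a, FiniteDimensional K (V a)]
    (t : MultilinearMap K V K)
    -- nondegeneracy
    (hnd : ∀ (a : Fin l) (w : V a),
      (∀ v : ∀ b, V b, t (Function.update v a w) = 0) → w = 0)
    -- the densor space is 1-dimensional
    (hdim : Module.finrank K
      (Submodule.span K {s : MultilinearMap K V K | DerSet t ⊆ DerSet s}) = 1)
    -- every `Der(t)`-submodule of each `Vₐ` has an invariant complement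
    (hred : ∀ (a : Fin l) (U : Submodule K (V a)),
      (∀ δ ∈ DerSet t, ∀ u ∈ U, δ a u ∈ U) →
      ∃ W : Submodule K (V a), IsCompl U W ∧ ∀ δ ∈ DerSet t, ∀ w ∈ W, δ a w ∈ W) :
    ∀ a : Fin l, Nontrivial (V a) ∧
      ∀ U : Submodule K (V a), (∀ δ ∈ DerSet t, ∀ u ∈ U, δ a u ∈ U) →
        U = ⊥ ∨ U = ⊤ :=
  tiny_densor_simple_general V t hnd hdim hred
end

section
/- Let t : V₁ × ⋯ × Vₗ → K be multilinear, let a ∈ {1,…,ℓ}, and let e : Vₐ → Vₐ be an idempotent linear map commuting with δₐ for every derivation δ ∈ Der(t). Then the multilinear form s defined by ⟨s|v₁,…,vₗ⟩ = ⟨t|v₁,…,e vₐ,…,vₗ⟩ satisfies Der(t) ⊆ Der(s), i.e., s lies in the densor space of t. -/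
theorem Function.update_update_apply_of_comm {ι : Type*} [DecidableEq ι] {β : ι → Type*}
    (v : ∀ i, β i) (a b : ι) (f : β a → β a) (d : ∀ i, β i → β i)
    (hcomm : ∀ x, f (d a x) = d a (f x)) :
    update (update v b (d b (v b))) a (f (update v b (d b (v b)) a)) =
      update (update v a (f (v a))) b (d b (update v a (f (v a)) b)) := by
  by_cases hba : b = a
  · subst hba
    simp [hcomm]
  · rw [update_comm hba, update_of_ne hba, update_of_ne (Ne.symm hba)]

theorem mem_derSet_of_comm {K : Type} [Field K] {l : ℕ} {V : Fin l → Type}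
    [∀ a, AddCommGroup (V a)] [∀ a, Module K (V a)]
    {t s : MultilinearMap K V K} {a : Fin l} {e : Module.End K (V a)}
    (hs : ∀ v : ∀ b, V b, s v = t (Function.update v a (e (v a))))
    {δ : ∀ b, Module.End K (V b)} (hδ : δ ∈ DerSet t) (hcomm : e ∘ₗ δ a = δ a ∘ₗ e) :
    δ ∈ DerSet s := by
  intro v
  have hslot : ∀ x, e (δ a x) = δ a (e x) := LinearMap.congr_fun hcomm
  calc ∑ b, s (Function.update v b (δ b (v b)))
      = ∑ b, t (Function.update (Function.update v a (e (v a))) b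
          (δ b (Function.update v a (e (v a)) b))) := by
        refine Finset.sum_congr rfl fun b _ => ?_
        rw [hs, Function.update_update_apply_of_comm v a b e (fun b => δ b) hslot]
    _ = 0 := hδ _

theorem idempotent_gives_densor_element_general
    {K : Type} [Field K] {l : ℕ} (V : Fin l → Type)
    [∀ a, AddCommGroup (V a)] [∀ a, Module K (V a)]
    (t : MultilinearMap K V K) (a : Fin l)
    (e : Module.End K (V a))
    (hcomm : ∀ δ ∈ DerSet t, e ∘ₗ δ a = δ a ∘ₗ e)
    (s : MultilinearMap K V K)
    (hs : ∀ v : ∀ b, V b, s v = t (Function.update v a (e (v a)))) :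
    DerSet t ⊆ DerSet s :=
  fun δ hδ => mem_derSet_of_comm hs hδ (hcomm δ hδ)

/-- If `e : Vₐ → Vₐ` is an idempotent commuting with the `a`-th component of every
derivation of `t`, then the multilinear form `s = ⟨t|…, e vₐ, …⟩` satisfies
`Der(t) ⊆ Der(s)`, i.e. `s` lies in the densor space of `t`. -/
theorem idempotent_gives_densor_element
    {K : Type} [Field K] {l : ℕ} (V : Fin l → Type)
    [∀ a, AddCommGroup (V a)] [∀ a, Module K (V a)] [∀ a, FiniteDimensional K (V a)]
    (t : MultilinearMap K V K) (a : Fin l)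
    (e : Module.End K (V a)) (he : e ∘ₗ e = e)
    (hcomm : ∀ δ ∈ DerSet t, e ∘ₗ δ a = δ a ∘ₗ e)
    (s : MultilinearMap K V K)
    (hs : ∀ v : ∀ b, V b, s v = t (Function.update v a (e (v a)))) :
    DerSet t ⊆ DerSet s :=
  idempotent_gives_densor_element_general V t a e hcomm s hs
end

section
/- Let λ and μ be partitions with at most n parts and let Y, Y' be the corresponding Young diagrams. With μ = (2, 1, …, 1) a partition of n+1 (one part equal to 2 and n−1 parts equal to 1), the Littlewood–Richardson coefficient c^λ_{λ,μ} for sl_{n+1} equals the number of distinct positive part sizes of λ: c^λ_{λ,μ} = |{λᵢ | 1 ≤ i ≤ n, λᵢ > 0}|. -/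
/-- One step of the crystal operation `Y ↦ Y[j]` on partitions with `n` parts
(eq. (row-insert)): for `j ≤ n` add a box to row `j`, for `j = n+1` remove a box from
every row; the result must again be a partition (else `none`). -/
def diagStep {n : ℕ} (p : Fin n → ℕ) (b : Fin (n + 1)) : Option (Fin n → ℕ) :=
  if h : (b : ℕ) < n then
    let q := Function.update p ⟨b, h⟩ (p ⟨b, h⟩ + 1)
    if ∀ i j : Fin n, i ≤ j → q j ≤ q i then some q else none
  else
    if ∀ i, 0 < p i then some (fun i => p i - 1) else none

/-- Iterated crystal operation `Y ↦ Y[b₁, …, b_m]`, failing if any intermediate step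
does not produce a Young diagram. -/
def diagSteps {n : ℕ} (p : Fin n → ℕ) : List (Fin (n + 1)) → Option (Fin n → ℕ)
  | [] => some p
  | b :: bs => (diagStep p b).bind fun q => diagSteps q bs

/-- The `sl_{n+1}` Littlewood–Richardson coefficient `c^λ_{λ,μ}` for
`μ = (2, 1, …, 1) ⊢ n+1` (here `n = m+1`), defined via the crystal tensor-product rule
(Hong–Kang, Theorem 8.6.6): it counts the semistandard tableaux `d ⊗ a₁ ⊗ ⋯ ⊗ aₙ` of
shape `μ` (column `a₁ < ⋯ < aₙ`, extra first-row box `d ≥ a₁`, entries in `[n+1]`)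
with `Y[d, a₁, …, aₙ] = Y(λ)`. -/
noncomputable def lrCoeffHook (m : ℕ) (lam : Fin (m + 1) → ℕ) : ℕ :=
  Set.ncard {da : Fin (m + 2) × (Fin (m + 1) → Fin (m + 2)) |
    StrictMono da.2 ∧ da.2 0 ≤ da.1 ∧
    diagSteps lam (da.1 :: List.ofFn da.2) = some lam}

/-!
Rows are `Fin n` (0-indexed) and the letter `Fin.last n` removes a full column. A strictly
increasing column `a : Fin n → Fin (n + 1)` omits exactly one letter `k`, i.e. `a = k.succAbove`.
Along a word, row `i` gains a box per letter `i` and loses one per letter `last`, so a word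
returning `Y(λ)` to itself contains all `n + 1` letters equally often; a word of length `n + 1`
then contains each exactly once, which forces `d = k`. After its first letter, the word
`k :: k.succAbove` adds the remaining rows in increasing order (ending with a column removal when
`k ≠ last`), and these steps stay within partitions as soon as the first one does. So the word
returns to `Y(λ)` iff `λ`, padded by a zero part, strictly descends at `k`; `a₀ ≤ d` excludes
`k = 0`, and the descents of an antitone sequence ending in `0` correspond to its distinct
positive values.
-/

open Function

theorem List.ofFn_succAbove {n : ℕ} (k : Fin (n + 1)) :
    List.ofFn k.succAbove = (List.finRange (n + 1)).erase k := by
  refine List.SortedLT.eq_of_mem_iff (List.sortedLT_ofFn_iff.mpr (Fin.strictMono_succAbove k))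
    ((List.sortedLT_finRange _).pairwise.sublist List.erase_sublist).sortedLT fun a => ?_
  simp [(List.nodup_finRange _).mem_erase_iff, Fin.exists_succAbove_eq_iff]

theorem Fin.exists_succAbove_eq_of_strictMono {n : ℕ} {a : Fin n → Fin (n + 1)}
    (ha : StrictMono a) : ∃ k : Fin (n + 1), a = k.succAbove := by
  obtain ⟨k, hk⟩ : ∃ k, (Finset.univ.image a)ᶜ = {k} := Finset.card_eq_one.mp (by
    simp [Finset.card_compl, Finset.card_image_of_injective _ ha.injective])
  have hrange : Finset.univ.image a = {k}ᶜ := by rw [← hk, compl_compl]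
  refine ⟨k, ?_⟩
  rw [Finset.orderEmbOfFin_unique (s := {k}ᶜ) (by simp [Finset.card_compl])
    (fun x => hrange ▸ Finset.mem_image_of_mem a (Finset.mem_univ x)) ha,
    Finset.orderEmbOfFin_compl_singleton_eq_succAboveOrderEmb]
  rfl

theorem Fin.succAbove_zero_le_iff {n : ℕ} {k : Fin (n + 2)} : k.succAbove 0 ≤ k ↔ k ≠ 0 := by
  rcases eq_or_ne k 0 with rfl | hk
  · simp
  · rw [Fin.succAbove_of_castSucc_lt _ _ (by simpa [Fin.pos_iff_ne_zero] using hk)]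
    simp [hk]

theorem Fin.card_filter_succ_lt_castSucc {α : Type*} [LinearOrder α] {n : ℕ}
    {f : Fin (n + 1) → α} (hf : Antitone f) :
    (Finset.univ.filter fun i : Fin n => f i.succ < f i.castSucc).card =
      ((Finset.univ.image f).filter fun v => f (Fin.last n) < v).card := by
  have hdesc : ∀ i j : Fin n, i < j → f i.succ < f i.castSucc → f j.castSucc < f i.castSucc :=
    fun i j hij hi => (hf (Fin.succ_le_castSucc_iff.mpr hij)).trans_lt hi
  refine Finset.card_nbij (fun i => f i.castSucc) ?_ ?_ ?_
  · intro i hi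
    simp only [Finset.coe_filter, Finset.mem_univ, true_and, Set.mem_ofPred_eq] at hi
    simpa using (hf (Fin.le_last i.succ)).trans_lt hi
  · intro i hi j hj hij
    simp only [Finset.coe_filter, Finset.mem_univ, true_and, Set.mem_ofPred_eq] at hi hj
    by_contra hne
    rcases lt_or_gt_of_ne hne with h | h
    · exact (hdesc i j h hi).ne hij.symm
    · exact (hdesc j i h hj).ne hij
  · rintro v hv
    simp only [Finset.coe_filter, Finset.mem_image, Finset.mem_univ, true_and,
      Set.mem_ofPred_eq] at hv
    obtain ⟨⟨j, rfl⟩, hlast⟩ := hv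
    set s := Finset.univ.filter fun k => f k = f j
    have hs : s.Nonempty := ⟨j, by simp [s]⟩
    have hmax : f (s.max' hs) = f j := (Finset.mem_filter.mp (s.max'_mem hs)).2
    obtain ⟨i, hi⟩ := Fin.exists_castSucc_eq.mpr fun h => hlast.ne (h ▸ hmax)
    have hle : ∀ k, f k = f j → k ≤ i.castSucc := fun k hk => hi ▸ s.le_max' k (by simp [s, hk])
    rw [← hi] at hmax
    refine ⟨i, ?_, hmax⟩
    simp only [Finset.coe_filter, Finset.mem_univ, true_and, Set.mem_ofPred_eq]
    refine lt_of_le_of_ne (hf (Fin.castSucc_le_succ i)) fun heq => ?_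
    exact (Fin.castSucc_lt_succ (i := i)).not_ge (hle _ (heq.trans hmax))

section Crystal

variable {n : ℕ}

theorem diagStep_castSucc (p : Fin n → ℕ) (r : Fin n) :
    diagStep p r.castSucc =
      if Antitone (update p r (p r + 1)) then some (update p r (p r + 1)) else none := by
  simp only [diagStep, Fin.val_castSucc, r.isLt, dite_true, Fin.eta]
  rfl

theorem diagStep_last (p : Fin n → ℕ) :
    diagStep p (Fin.last n) = if ∀ i, 0 < p i then some (fun i => p i - 1) else none := by
  simp [diagStep]

@[simp]
theorem diagSteps_nil (p : Fin n → ℕ) : diagSteps p [] = some p := rfl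

@[simp]
theorem diagSteps_cons (p : Fin n → ℕ) (b : Fin (n + 1)) (bs : List (Fin (n + 1))) :
    diagSteps p (b :: bs) = (diagStep p b).bind fun q => diagSteps q bs := rfl

theorem diagSteps_append (p : Fin n → ℕ) (l₁ l₂ : List (Fin (n + 1))) :
    diagSteps p (l₁ ++ l₂) = (diagSteps p l₁).bind fun q => diagSteps q l₂ := by
  induction l₁ generalizing p with
  | nil => rfl
  | cons b bs ih => simp [ih, Option.bind_assoc]

theorem le_update_succ (p : Fin n → ℕ) (r j : Fin n) : p j ≤ update p r (p r + 1) j := by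
  rcases eq_or_ne j r with rfl | h
  · simp
  · simp [h]

theorem antitone_update_succ_iff {p : Fin n → ℕ} (hp : Antitone p) (r : Fin n) :
    Antitone (update p r (p r + 1)) ↔ ∀ j < r, p r < p j := by
  refine ⟨fun h j hj => ?_, fun hr a b hab => ?_⟩
  · simpa [hj.ne] using h hj.le
  · simp only [update_apply]
    split_ifs with hb ha ha
    · exact le_rfl
    · exact hr a (lt_of_le_of_ne (hb ▸ hab) ha)
    · exact (hp (ha ▸ hab)).trans (Nat.le_succ _)
    · exact hp hab

theorem diagSteps_count {p q : Fin n → ℕ} {l : List (Fin (n + 1))}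
    (h : diagSteps p l = some q) (i : Fin n) :
    q i + l.count (Fin.last n) = p i + l.count i.castSucc := by
  induction l generalizing p with
  | nil => cases h; rfl
  | cons b bs ih =>
    obtain ⟨q₁, h₁, h₂⟩ := Option.bind_eq_some_iff.mp h
    have hq := ih h₂
    cases b using Fin.lastCases with
    | last =>
      rw [diagStep_last] at h₁
      split_ifs at h₁ with hpos
      cases h₁
      have := hpos i
      simp only [List.count_cons_self, List.count_cons, beq_iff_eq,
        (Fin.castSucc_lt_last i).ne', if_false] at hq ⊢
      omega
    | cast r =>
      rw [diagStep_castSucc] at h₁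
      split_ifs at h₁
      cases h₁
      rcases eq_or_ne i r with rfl | hir
      · simp only [update_self, List.count_cons_self] at hq ⊢
        simp only [List.count_cons, beq_iff_eq, (Fin.castSucc_lt_last i).ne, if_false]
        omega
      · simp_all [(Fin.castSucc_lt_last r).ne, Ne.symm hir]

theorem count_eq_one_of_diagSteps_eq_self {p : Fin n → ℕ} {w : List (Fin (n + 1))}
    (hw : w.length = n + 1) (h : diagSteps p w = some p) (b : Fin (n + 1)) :
    w.count b = 1 := by
  have hb : ∀ b, w.count b = w.count (Fin.last n) := fun b => by
    cases b using Fin.lastCases with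
    | last => rfl
    | cast i => simpa using (diagSteps_count h i).symm
  have hsum : ∑ b, w.count b = w.length := by
    simpa using Multiset.sum_count_eq_card (s := Finset.univ) (m := (w : Multiset (Fin (n + 1))))
      (fun a _ => Finset.mem_univ a)
  simp only [hb, Finset.sum_const, Finset.card_univ, Fintype.card_fin, smul_eq_mul, hw] at hsum
  rw [hb, (Nat.mul_eq_left (Nat.succ_ne_zero n)).mp hsum]

theorem diagSteps_map_castSucc {p : Fin n → ℕ} (hp : Antitone p) {l : List (Fin n)}
    (hl : l.Pairwise (· < ·)) (hgap : ∀ i ∈ l, ∀ j < i, j ∈ l ∨ p i < p j) :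
    diagSteps p (l.map Fin.castSucc) = some (fun i => p i + l.count i) := by
  induction l generalizing p with
  | nil => simp
  | cons r rs ih =>
    rw [List.pairwise_cons] at hl
    have hr : ∀ j < r, p r < p j := fun j hj =>
      (hgap r List.mem_cons_self j hj).resolve_left fun hj' =>
        (List.mem_cons.mp hj').elim (fun e => hj.ne e) fun h => (hl.1 j h).not_gt hj
    set q := update p r (p r + 1) with hq_def
    have hq : Antitone q := (antitone_update_succ_iff hp r).mpr hr
    have hgap' : ∀ i ∈ rs, ∀ j < i, j ∈ rs ∨ q i < q j := by
      intro i hi j hj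
      have hir : i ≠ r := (hl.1 i hi).ne'
      rcases hgap i (List.mem_cons_of_mem r hi) j hj with hj' | hlt
      · rcases List.mem_cons.mp hj' with rfl | hj'
        · right
          simpa [q, hir] using Nat.lt_succ_of_le (hp (hl.1 i hi).le)
        · exact Or.inl hj'
      · right
        calc q i = p i := by simp [q, hir]
          _ < p j := hlt
          _ ≤ q j := le_update_succ p r j
    rw [List.map_cons, diagSteps_cons, diagStep_castSucc, ← hq_def, if_pos hq, Option.bind_some,
      ih hq hl.2 hgap']
    congr 1
    funext i
    rcases eq_or_ne i r with rfl | hir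
    · simp [q]; omega
    · simp [q, hir, Ne.symm hir]

end Crystal

section Pivot

variable {n : ℕ} {lam : Fin n → ℕ}

def appendZero (lam : Fin n → ℕ) : Fin (n + 1) → ℕ := Fin.snoc lam 0

@[simp]
theorem appendZero_castSucc (i : Fin n) : appendZero lam i.castSucc = lam i :=
  Fin.snoc_castSucc ..

@[simp]
theorem appendZero_last : appendZero lam (Fin.last n) = 0 := Fin.snoc_last ..

theorem antitone_appendZero (hlam : Antitone lam) : Antitone (appendZero lam) := by
  intro a b hab
  cases b using Fin.lastCases with
  | last => simp
  | cast b =>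
    cases a using Fin.lastCases with
    | last => exact absurd hab (Fin.castSucc_lt_last b).not_ge
    | cast a => simpa using hlam (Fin.castSucc_le_castSucc_iff.mp hab)

theorem diagSteps_last_cons_ofFn_succAbove (hlam : Antitone lam) (hpos : ∀ i, 0 < lam i) :
    diagSteps lam (Fin.last n :: List.ofFn (Fin.last n).succAbove) = some lam := by
  have hsub : Antitone fun i => lam i - 1 := fun a b hab => Nat.sub_le_sub_right (hlam hab) 1
  rw [Fin.succAbove_last, List.ofFn_eq_map, diagSteps_cons, diagStep_last, if_pos hpos,
    Option.bind_some, diagSteps_map_castSucc hsub (List.sortedLT_finRange n).pairwise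
      fun _ _ j _ => Or.inl (List.mem_finRange j)]
  congr 1
  funext i
  have := hpos i
  simp only [List.count_finRange]
  omega

theorem diagSteps_castSucc_cons_ofFn_succAbove (hlam : Antitone lam) (r : Fin n)
    (hr : ∀ j < r, lam r < lam j) :
    diagSteps lam (r.castSucc :: List.ofFn r.castSucc.succAbove) = some lam := by
  have hword : List.ofFn r.castSucc.succAbove =
      ((List.finRange n).erase r).map Fin.castSucc ++ [Fin.last n] := by
    rw [List.ofFn_succAbove, List.finRange_succ_last,
      List.erase_append_left _ (List.mem_map_of_mem (List.mem_finRange r)),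
      ← List.map_erase (Fin.castSucc_injective n)]
  set q := update lam r (lam r + 1) with hq_def
  have hq : Antitone q := (antitone_update_succ_iff hlam r).mpr hr
  have hgap : ∀ i ∈ (List.finRange n).erase r, ∀ j < i,
      j ∈ (List.finRange n).erase r ∨ q i < q j := by
    intro i hi j hji
    have hir : i ≠ r := ((List.nodup_finRange n).mem_erase_iff.mp hi).1
    rcases eq_or_ne j r with rfl | hjr
    · right
      simpa [q, hir] using Nat.lt_succ_of_le (hlam hji.le)
    · exact Or.inl ((List.nodup_finRange n).mem_erase_iff.mpr ⟨hjr, List.mem_finRange j⟩)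
  have hadd : diagSteps q (((List.finRange n).erase r).map Fin.castSucc) =
      some fun i => lam i + 1 := by
    rw [diagSteps_map_castSucc hq ((List.sortedLT_finRange n).pairwise.sublist List.erase_sublist)
      hgap]
    congr 1
    funext i
    rcases eq_or_ne i r with rfl | hir
    · simp [q]
    · simp [q, hir]
  rw [hword, ← List.cons_append, diagSteps_append, diagSteps_cons, diagStep_castSucc, ← hq_def,
    if_pos hq, Option.bind_some, hadd, Option.bind_some]
  simp [diagStep_last]

theorem diagSteps_cons_ofFn_succAbove_eq_self_iff (hlam : Antitone lam) (k : Fin (n + 1)) :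
    diagSteps lam (k :: List.ofFn k.succAbove) = some lam ↔
      ∀ j < k, appendZero lam k < appendZero lam j := by
  cases k using Fin.lastCases with
  | last =>
    have hlt : (∀ j < Fin.last n, appendZero lam (Fin.last n) < appendZero lam j) ↔
        ∀ i, 0 < lam i := by
      simp [Fin.forall_fin_succ', Fin.castSucc_lt_last]
    refine Iff.trans ⟨fun h => ?_, diagSteps_last_cons_ofFn_succAbove hlam⟩ hlt.symm
    obtain ⟨q, h₁, -⟩ := Option.bind_eq_some_iff.mp h
    rw [diagStep_last] at h₁
    split_ifs at h₁ with hpos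
    exact hpos
  | cast r =>
    have hlt : (∀ j < r.castSucc, appendZero lam r.castSucc < appendZero lam j) ↔
        ∀ j < r, lam r < lam j := by
      simp [Fin.forall_fin_succ', Fin.le_last]
    refine Iff.trans ⟨fun h => ?_, diagSteps_castSucc_cons_ofFn_succAbove hlam r⟩ hlt.symm
    obtain ⟨q, h₁, -⟩ := Option.bind_eq_some_iff.mp h
    rw [diagStep_castSucc] at h₁
    split_ifs at h₁ with hq
    exact (antitone_update_succ_iff hlam r).mp hq

theorem eq_of_diagSteps_cons_ofFn_succAbove_eq_self {d k : Fin (n + 1)}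
    (h : diagSteps lam (d :: List.ofFn k.succAbove) = some lam) : d = k := by
  have hk := count_eq_one_of_diagSteps_eq_self (by simp) h k
  have hmem : k ∉ List.ofFn k.succAbove := by simp [Fin.succAbove_ne]
  rw [List.count_cons, List.count_eq_zero_of_not_mem hmem] at hk
  simpa using hk

end Pivot

theorem hookTableaux_eq_image {m : ℕ} {lam : Fin (m + 1) → ℕ} (hlam : Antitone lam) :
    {da : Fin (m + 2) × (Fin (m + 1) → Fin (m + 2)) |
      StrictMono da.2 ∧ da.2 0 ≤ da.1 ∧ diagSteps lam (da.1 :: List.ofFn da.2) = some lam} =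
    (fun i : Fin (m + 1) => (i.succ, i.succ.succAbove)) ''
      {i | appendZero lam i.succ < appendZero lam i.castSucc} := by
  ext ⟨d, a⟩
  simp only [Set.mem_ofPred_eq, Set.mem_image, Prod.mk.injEq]
  constructor
  · rintro ⟨ha, had, hrun⟩
    obtain ⟨k, rfl⟩ := Fin.exists_succAbove_eq_of_strictMono ha
    obtain rfl := eq_of_diagSteps_cons_ofFn_succAbove_eq_self hrun
    obtain ⟨i, rfl⟩ := Fin.exists_succ_eq.mpr (Fin.succAbove_zero_le_iff.mp had)
    exact ⟨i, (diagSteps_cons_ofFn_succAbove_eq_self_iff hlam _).mp hrun _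
      Fin.castSucc_lt_succ, rfl, rfl⟩
  · rintro ⟨i, hi, rfl, rfl⟩
    refine ⟨Fin.strictMono_succAbove _, Fin.succAbove_zero_le_iff.mpr (Fin.succ_ne_zero i),
      (diagSteps_cons_ofFn_succAbove_eq_self_iff hlam _).mpr fun j hj => ?_⟩
    exact hi.trans_le (antitone_appendZero hlam (Fin.le_castSucc_iff.mpr hj))

/-- For `μ = (2, 1, …, 1) ⊢ n+1`, the coefficient `c^λ_{λ,μ}` equals the number of
distinct positive part sizes of `λ`. -/
theorem lr_coeff_counts_distinct_parts (m : ℕ) (lam : Fin (m + 1) → ℕ)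
    (hlam : Antitone lam) :
    lrCoeffHook m lam =
      ((Finset.univ.image lam).filter (fun x => 0 < x)).card := by
  rw [lrCoeffHook, hookTableaux_eq_image hlam,
    Set.ncard_image_of_injective _ fun i j h => Fin.succ_injective _ (Prod.ext_iff.mp h).1,
    Set.ncard_eq_toFinset_card', Set.toFinset_ofPred,
    Fin.card_filter_succ_lt_castSucc (antitone_appendZero hlam), appendZero_last]
  congr 1
  ext v
  simp only [Finset.mem_filter, Finset.mem_image, Finset.mem_univ, true_and]
  rw [Fin.exists_fin_succ']
  simp only [appendZero_castSucc, appendZero_last]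
  exact and_congr_left fun hv => or_iff_left hv.ne
end

section
/- Let L = M ⊕ N be a Lie algebra direct sum of ideals acting on a finite-dimensional simple module V over an algebraically closed field K of characteristic 0, with M minimal. Then there exist a simple M-submodule S of V and a simple N-module T such that V ≅ S ⊗ T as L-modules, where M acts on the first factor and N acts on the second factor. -/
/-!
Let `S` be a minimal nonzero `M`-invariant subspace of `V` and `T` the space of `M`-equivariant
maps `S → V`. Since `⁅M, N⁆ ≤ M ⊓ N = ⊥`, the ideal `N` acts on `T` by post-composition, and
evaluation `S ⊗ T → V` is equivariant for both actions. Its image is a nonzero `L`-submodule,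
hence all of `V`. It is injective because, by Schur's lemma, a minimal `M`-submodule of `S^d`
has the form `{(c₁ x, …, c_d x) | x ∈ S}`; one inside the kernel would give a linear relation
`∑ cᵢ tᵢ = 0` among a basis of `T`. Finally, for a nonzero `N`-submodule `U ≤ T` the evaluation
already maps `S ⊗ U` onto `V`, so `dim U ≥ dim T` and `T` is simple.
-/

open TensorProduct

namespace EndFamily

open Module

variable {K A E F : Type*} [Field K] [AddCommGroup E] [Module K E] [AddCommGroup F] [Module K F]

def IsInvariant (ρ : A → Module.End K E) (U : Submodule K E) : Prop :=
  ∀ a, ∀ u ∈ U, ρ a u ∈ U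

structure IsIrreducible (ρ : A → Module.End K E) : Prop where
  nontrivial : Nontrivial E
  eq_bot_or_eq_top : ∀ U, IsInvariant ρ U → U = ⊥ ∨ U = ⊤

def restrict (ρ : A → Module.End K E) {U : Submodule K E} (hU : IsInvariant ρ U) :
    A → Module.End K U :=
  fun a => (ρ a).restrict (hU a)

def intertwiners (ρ : A → Module.End K E) (ρ' : A → Module.End K F) :
    Submodule K (E →ₗ[K] F) where
  carrier := {f | ∀ a x, f (ρ a x) = ρ' a (f x)}
  add_mem' hf hg a x := by simp [hf a x, hg a x]
  zero_mem' a x := by simp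
  smul_mem' c f hf a x := by simp [hf a x]

variable {ρ : A → Module.End K E} {ρ' : A → Module.End K F} {f : E →ₗ[K] F}

theorem isInvariant_ker (hf : f ∈ intertwiners ρ ρ') : IsInvariant ρ (LinearMap.ker f) :=
  fun a x hx => by simp_all [LinearMap.mem_ker, hf a x]

theorem isInvariant_range (hf : f ∈ intertwiners ρ ρ') :
    IsInvariant ρ' (LinearMap.range f) := by
  rintro a _ ⟨x, rfl⟩
  exact ⟨ρ a x, hf a x⟩

theorem injective_of_mem_intertwiners (hE : IsIrreducible ρ) (hf : f ∈ intertwiners ρ ρ')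
    (hf0 : f ≠ 0) : Function.Injective f := by
  refine LinearMap.ker_eq_bot.1 ?_
  exact (hE.eq_bot_or_eq_top _ (isInvariant_ker hf)).resolve_right
    fun h => hf0 (LinearMap.ker_eq_top.1 h)

theorem surjective_of_mem_intertwiners (hF : IsIrreducible ρ') (hf : f ∈ intertwiners ρ ρ')
    (hf0 : f ≠ 0) : Function.Surjective f := by
  refine LinearMap.range_eq_top.1 ?_
  exact (hF.eq_bot_or_eq_top _ (isInvariant_range hf)).resolve_left
    fun h => hf0 (LinearMap.range_eq_bot.1 h)

theorem exists_eq_smul_id_of_mem_intertwiners [IsAlgClosed K] [FiniteDimensional K E]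
    (hE : IsIrreducible ρ) {g : Module.End K E} (hg : g ∈ intertwiners ρ ρ) :
    ∃ c : K, g = c • LinearMap.id := by
  have := hE.nontrivial
  obtain ⟨c, hc⟩ := Module.End.exists_eigenvalue g
  obtain ⟨x, hx⟩ := hc.exists_hasEigenvector
  have hgc : g - c • LinearMap.id ∈ intertwiners ρ ρ :=
    sub_mem hg (Submodule.smul_mem _ c fun _ _ => rfl)
  refine ⟨c, sub_eq_zero.1 ?_⟩
  by_contra hne
  exact hx.2 (injective_of_mem_intertwiners hE hgc hne (by simp [hx.apply_eq_smul]))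

theorem comp_mem_intertwiners {G : Type*} [AddCommGroup G] [Module K G]
    {ρ'' : A → Module.End K G} {g : F →ₗ[K] G} (hg : g ∈ intertwiners ρ' ρ'')
    (hf : f ∈ intertwiners ρ ρ') : g ∘ₗ f ∈ intertwiners ρ ρ'' :=
  fun a x => by simp [hf a x, hg a (f x)]

theorem symm_mem_intertwiners (e : E ≃ₗ[K] F) (he : e.toLinearMap ∈ intertwiners ρ ρ') :
    e.symm.toLinearMap ∈ intertwiners ρ' ρ :=
  fun a x => e.injective (by simpa using (he a (e.symm x)).symm)

theorem eq_bot_or_eq_of_minimal {U W : Submodule K E}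
    (hU : Minimal (fun U => U ≠ ⊥ ∧ IsInvariant ρ U) U) (hWU : W ≤ U) (hW : IsInvariant ρ W) :
    W = ⊥ ∨ W = U :=
  or_iff_not_imp_left.2 fun hW0 => le_antisymm hWU (hU.2 ⟨hW0, hW⟩ hWU)

theorem isIrreducible_restrict {U : Submodule K E}
    (hU : Minimal (fun U => U ≠ ⊥ ∧ IsInvariant ρ U) U) :
    IsIrreducible (restrict ρ hU.1.2) := by
  refine ⟨Submodule.nontrivial_iff_ne_bot.2 hU.1.1, fun W hW => ?_⟩
  have hWinv : IsInvariant ρ (W.map U.subtype) := by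
    rintro a _ ⟨w, hw, rfl⟩
    exact ⟨_, hW a w hw, rfl⟩
  have hinj := Submodule.map_injective_of_injective U.injective_subtype
  rcases eq_bot_or_eq_of_minimal hU (Submodule.map_subtype_le U W) hWinv with h | h
  · exact Or.inl (hinj (by rw [h, Submodule.map_bot]))
  · exact Or.inr (hinj (by rw [h, Submodule.map_top, Submodule.range_subtype]))

def diag (ρ : A → Module.End K E) (ι : Type*) : A → Module.End K (ι → E) :=
  fun a => (ρ a).compLeft ι

theorem exists_smul_mem_of_minimal [IsAlgClosed K] [FiniteDimensional K E] {ι : Type*}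
    (hE : IsIrreducible ρ) {Q : Submodule K (ι → E)}
    (hQ : Minimal (fun U => U ≠ ⊥ ∧ IsInvariant (diag ρ ι) U) Q) :
    ∃ c : ι → K, c ≠ 0 ∧ ∀ x : E, (fun i => c i • x) ∈ Q := by
  have := hE.nontrivial
  obtain ⟨q, hqQ, hq0⟩ := Submodule.exists_mem_ne_zero_of_ne_bot hQ.1.1
  obtain ⟨j, hj⟩ := Function.ne_iff.1 hq0
  let p : ι → Q →ₗ[K] E := fun i => LinearMap.proj i ∘ₗ Q.subtype
  have hp : ∀ i, p i ∈ intertwiners (restrict (diag ρ ι) hQ.1.2) ρ := fun i a x => rfl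
  have hpj0 : p j ≠ 0 := fun h => hj (LinearMap.congr_fun h ⟨q, hqQ⟩)
  let e : Q ≃ₗ[K] E := LinearEquiv.ofBijective (p j)
    ⟨injective_of_mem_intertwiners (isIrreducible_restrict hQ) (hp j) hpj0,
      surjective_of_mem_intertwiners hE (hp j) hpj0⟩
  have he : e.symm.toLinearMap ∈ intertwiners ρ (restrict (diag ρ ι) hQ.1.2) :=
    symm_mem_intertwiners e (hp j)
  choose c hc using fun i =>
    exists_eq_smul_id_of_mem_intertwiners hE (comp_mem_intertwiners (hp i) he)
  have hcoord : ∀ x i, (e.symm x : ι → E) i = c i • x :=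
    fun x i => LinearMap.congr_fun (hc i) x
  refine ⟨c, fun hc0 => ?_, fun x => ?_⟩
  · obtain ⟨x, hx⟩ := exists_ne (0 : E)
    have hj : (e.symm x : ι → E) j = x := e.apply_symm_apply x
    exact hx (by rw [← hj, hcoord, hc0, Pi.zero_apply, zero_smul])
  · convert (e.symm x).2 using 1
    exact funext fun i => (hcoord x i).symm

theorem eq_zero_of_sum_apply_eq_zero [IsAlgClosed K] [FiniteDimensional K E] {ι : Type*}
    [Fintype ι] (hE : IsIrreducible ρ) {f : ι → E →ₗ[K] F} (hf : ∀ i, f i ∈ intertwiners ρ ρ')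
    (hli : LinearIndependent K f) {s : ι → E} (hs : ∑ i, f i (s i) = 0) : s = 0 := by
  let Φ : (ι → E) →ₗ[K] F := ∑ i, f i ∘ₗ LinearMap.proj i
  have hΦ : Φ ∈ intertwiners (diag ρ ι) ρ' := fun a g => by
    simp [Φ, diag, hf _ a, map_sum]
  by_contra hs0
  have hker : LinearMap.ker Φ ≠ ⊥ := fun h =>
    hs0 ((LinearMap.ker_eq_bot'.1 h) s (by simpa [Φ] using hs))
  obtain ⟨Q, hQΦ, hQ⟩ := exists_minimal_le_of_wellFoundedLT
    (fun U => U ≠ ⊥ ∧ IsInvariant (diag ρ ι) U) _ ⟨hker, isInvariant_ker hΦ⟩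
  obtain ⟨c, hc0, hc⟩ := exists_smul_mem_of_minimal hE hQ
  refine hc0 (funext (Fintype.linearIndependent_iff.1 hli c (LinearMap.ext fun x => ?_)))
  simpa [Φ] using hQΦ (hc x)

theorem isInvariant_sumElim {B : Type*} {ρ : A → Module.End K E} {τ : B → Module.End K E}
    {U : Submodule K E} : IsInvariant (Sum.elim ρ τ) U ↔ IsInvariant ρ U ∧ IsInvariant τ U :=
  ⟨fun h => ⟨fun a => h (.inl a), fun b => h (.inr b)⟩, fun h => Sum.rec h.1 h.2⟩

variable (ρ ρ') in
def evalTensor : E ⊗[K] intertwiners ρ ρ' →ₗ[K] F :=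
  TensorProduct.lift (LinearMap.applyₗ.compl₂ (intertwiners ρ ρ').subtype)

@[simp]
theorem evalTensor_tmul (x : E) (f : intertwiners ρ ρ') :
    evalTensor ρ ρ' (x ⊗ₜ f) = (f : E →ₗ[K] F) x :=
  rfl

theorem evalTensor_map_left (a : A) (z : E ⊗[K] intertwiners ρ ρ') :
    evalTensor ρ ρ' (TensorProduct.map (ρ a) LinearMap.id z) = ρ' a (evalTensor ρ ρ' z) := by
  induction z using TensorProduct.induction_on with
  | zero => simp
  | tmul x f => simp [f.2 a x]
  | add z z' hz hz' => simp_all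

theorem evalTensor_injective [IsAlgClosed K] [FiniteDimensional K E] [FiniteDimensional K F]
    (hE : IsIrreducible ρ) : Function.Injective (evalTensor ρ ρ') := by
  let b := Module.finBasis K (intertwiners ρ ρ')
  let e := TensorProduct.equivFinsuppOfBasisRight (M := E) b
  refine (injective_iff_map_eq_zero _).2 fun z hz => ?_
  obtain ⟨g, rfl⟩ := e.symm.surjective z
  have hli : LinearIndependent K fun i => (b i : E →ₗ[K] F) :=
    b.linearIndependent.map' (intertwiners ρ ρ').subtype (Submodule.ker_subtype _)
  have hg := eq_zero_of_sum_apply_eq_zero hE (fun i => (b i).2) hli (s := g)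
    (by simpa [e, Finsupp.sum_fintype] using hz)
  rw [Finsupp.coe_eq_zero.1 hg, map_zero]

section PostComposition

variable {B : Type*} {τ : B → Module.End K F}

variable (ρ) in
def postcomp (hcomm : ∀ a b, Commute (ρ' a) (τ b)) : B → Module.End K (intertwiners ρ ρ') :=
  fun b => (LinearMap.llcomp K E F F (τ b)).restrict fun f hf a x => by
    simp [hf a x, ← Module.End.mul_apply, (hcomm a b).eq]

theorem evalTensor_map_right (hcomm : ∀ a b, Commute (ρ' a) (τ b)) (b : B)
    (z : E ⊗[K] intertwiners ρ ρ') :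
    evalTensor ρ ρ' (TensorProduct.map LinearMap.id (postcomp ρ hcomm b) z) =
      τ b (evalTensor ρ ρ' z) := by
  induction z using TensorProduct.induction_on with
  | zero => simp
  | tmul x f => rfl
  | add z z' hz hz' => simp_all

theorem range_evalTensor_comp_eq_top {hcomm : ∀ a b, Commute (ρ' a) (τ b)}
    (hF : IsIrreducible (Sum.elim ρ' τ))
    {U : Submodule K (intertwiners ρ ρ')} (hU : IsInvariant (postcomp ρ hcomm) U) (hU0 : U ≠ ⊥) :
    LinearMap.range (evalTensor ρ ρ' ∘ₗ TensorProduct.map LinearMap.id U.subtype) = ⊤ := by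
  set Φ := evalTensor ρ ρ' ∘ₗ TensorProduct.map LinearMap.id U.subtype
  have hΦρ : ∀ a z, Φ (TensorProduct.map (ρ a) LinearMap.id z) = ρ' a (Φ z) := fun a z => by
    induction z using TensorProduct.induction_on with
    | zero => simp
    | tmul x f => simp [Φ, f.1.2 a x]
    | add z z' hz hz' => simp_all
  have hΦτ : ∀ b z, Φ (TensorProduct.map LinearMap.id (restrict (postcomp ρ hcomm) hU b) z) =
      τ b (Φ z) := fun b z => by
    induction z using TensorProduct.induction_on with
    | zero => simp
    | tmul x f => rfl
    | add z z' hz hz' => simp_all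
  have hinv : IsInvariant (Sum.elim ρ' τ) (LinearMap.range Φ) := by
    refine isInvariant_sumElim.2 ⟨?_, ?_⟩ <;> rintro c _ ⟨z, rfl⟩
    exacts [⟨_, hΦρ c z⟩, ⟨_, hΦτ c z⟩]
  refine (hF.eq_bot_or_eq_top _ hinv).resolve_left fun hΦ => ?_
  obtain ⟨f, hfU, hf0⟩ := Submodule.exists_mem_ne_zero_of_ne_bot hU0
  obtain ⟨x, hx⟩ : ∃ x, (f : E →ₗ[K] F) x ≠ 0 := by
    by_contra! h
    exact hf0 (Subtype.ext (LinearMap.ext h))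
  have hΦx := LinearMap.congr_fun (LinearMap.range_eq_bot.1 hΦ) (x ⊗ₜ ⟨f, hfU⟩)
  exact hx (by simpa [Φ] using hΦx)

variable [IsAlgClosed K] [FiniteDimensional K E] [FiniteDimensional K F]

theorem bijective_evalTensor (hcomm : ∀ a b, Commute (ρ' a) (τ b)) (hE : IsIrreducible ρ)
    (hF : IsIrreducible (Sum.elim ρ' τ)) (hT : intertwiners ρ ρ' ≠ ⊥) :
    Function.Bijective (evalTensor ρ ρ') := by
  have := Submodule.nontrivial_iff_ne_bot.2 hT
  refine ⟨evalTensor_injective hE, LinearMap.range_eq_top.1 (eq_top_iff.2 ?_)⟩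
  rw [← range_evalTensor_comp_eq_top (ρ := ρ) (hcomm := hcomm) hF (U := ⊤)
    (fun _ _ _ => Submodule.mem_top) top_ne_bot]
  exact LinearMap.range_comp_le_range _ _

theorem isIrreducible_postcomp (hcomm : ∀ a b, Commute (ρ' a) (τ b)) (hE : IsIrreducible ρ)
    (hF : IsIrreducible (Sum.elim ρ' τ)) (hT : intertwiners ρ ρ' ≠ ⊥) :
    IsIrreducible (postcomp ρ hcomm) := by
  have := Submodule.nontrivial_iff_ne_bot.2 hT
  have := hE.nontrivial
  refine ⟨inferInstance, fun U hU => or_iff_not_imp_left.2 fun hU0 => ?_⟩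
  have : Module.Free K U := .of_divisionRing K U
  have hU_le : finrank K F ≤ finrank K E * finrank K U := by
    rw [← Module.finrank_tensorProduct, ← finrank_top (R := K) (M := F),
      ← range_evalTensor_comp_eq_top hF hU hU0]
    exact LinearMap.finrank_range_le _
  have hT_eq : finrank K F = finrank K E * finrank K (intertwiners ρ ρ') := by
    rw [← Module.finrank_tensorProduct]
    exact (LinearEquiv.ofBijective _ (bijective_evalTensor hcomm hE hF hT)).finrank_eq.symm
  refine Submodule.eq_top_of_finrank_eq (le_antisymm (Submodule.finrank_le U) ?_)
  exact Nat.le_of_mul_le_mul_left (hT_eq ▸ hU_le) Module.finrank_pos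

end PostComposition

theorem IsIrreducible.conj {E' : Type*} [AddCommGroup E'] [Module K E'] (hρ : IsIrreducible ρ)
    (e : E ≃ₗ[K] E') : IsIrreducible fun a => e.conj (ρ a) := by
  have := hρ.nontrivial
  refine ⟨e.injective.nontrivial, fun U hU => ?_⟩
  have hinv : IsInvariant ρ (U.comap (e : E →ₗ[K] E')) := fun a x hx => by
    simpa [LinearEquiv.conj_apply] using hU a (e x) hx
  rw [← Submodule.map_comap_eq_of_surjective e.surjective U]
  rcases hρ.eq_bot_or_eq_top _ hinv with h | h
  · exact Or.inl (by rw [h, Submodule.map_bot])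
  · exact Or.inr (by rw [h, Submodule.map_top, LinearEquiv.range])

theorem _root_.TensorProduct.congr_refl_map {M N N' : Type*} [AddCommGroup M] [Module K M]
    [AddCommGroup N] [Module K N] [AddCommGroup N'] [Module K N'] (e : N ≃ₗ[K] N')
    (f : Module.End K M) (g : Module.End K N) (w : M ⊗[K] N) :
    TensorProduct.congr (LinearEquiv.refl K M) e (TensorProduct.map f g w) =
      TensorProduct.map f (e.conj g) (TensorProduct.congr (LinearEquiv.refl K M) e w) := by
  induction w using TensorProduct.induction_on with
  | zero => simp
  | tmul x y => simp [LinearEquiv.conj_apply]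
  | add w w' hw hw' => simp_all

theorem exists_tensor_decomposition [IsAlgClosed K] [FiniteDimensional K F] {B : Type*}
    {τ : B → Module.End K F} (hcomm : ∀ a b, Commute (ρ' a) (τ b))
    (hF : IsIrreducible (Sum.elim ρ' τ)) :
    ∃ (S : Submodule K F) (hS : Minimal (fun U => U ≠ ⊥ ∧ IsInvariant ρ' U) S)
      (d : ℕ) (σ : B → Module.End K (Fin d → K)), IsIrreducible σ ∧
      ∃ e : F ≃ₗ[K] S ⊗[K] (Fin d → K),
        (∀ a v, e (ρ' a v) = TensorProduct.map (restrict ρ' hS.1.2 a) LinearMap.id (e v)) ∧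
        (∀ b v, e (τ b v) = TensorProduct.map LinearMap.id (σ b) (e v)) := by
  have := hF.nontrivial
  obtain ⟨S, -, hS⟩ := exists_minimal_le_of_wellFoundedLT
    (fun U => U ≠ ⊥ ∧ IsInvariant ρ' U) ⊤ ⟨top_ne_bot, fun _ _ _ => Submodule.mem_top⟩
  have hE := isIrreducible_restrict hS
  have hT : intertwiners (restrict ρ' hS.1.2) ρ' ≠ ⊥ := by
    refine (Submodule.ne_bot_iff _).2 ⟨S.subtype, fun a x => rfl, fun h => hS.1.1 ?_⟩
    simpa using congrArg LinearMap.range h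
  let b := Module.finBasis K (intertwiners (restrict ρ' hS.1.2) ρ')
  let ε := LinearEquiv.ofBijective _ (bijective_evalTensor hcomm hE hF hT)
  let e := ε.symm ≪≫ₗ TensorProduct.congr (LinearEquiv.refl K S) b.equivFun
  refine ⟨S, hS, _, fun b' => b.equivFun.conj (postcomp _ hcomm b'),
    (isIrreducible_postcomp hcomm hE hF hT).conj b.equivFun, e, fun a v => ?_, fun b' v => ?_⟩
  · obtain ⟨w, rfl⟩ := ε.surjective v
    have : ρ' a (ε w) = ε (TensorProduct.map (restrict ρ' hS.1.2 a) LinearMap.id w) :=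
      (evalTensor_map_left a w).symm
    simp [e, this, TensorProduct.congr_refl_map]
  · obtain ⟨w, rfl⟩ := ε.surjective v
    have : τ b' (ε w) = ε (TensorProduct.map LinearMap.id (postcomp _ hcomm b') w) :=
      (evalTensor_map_right hcomm b' w).symm
    simp [e, this, TensorProduct.congr_refl_map]

end EndFamily

section LieAlgebra

variable {K L V : Type*} [CommRing K] [LieRing L] [LieAlgebra K L] [AddCommGroup V] [Module K V]
  [LieRingModule L V] [LieModule K L V]

theorem LieIdeal.lie_eq_zero_of_disjoint {I J : LieIdeal K L} (hIJ : Disjoint I J) {x y : L}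
    (hx : x ∈ I) (hy : y ∈ J) : ⁅x, y⁆ = 0 := by
  have := LieSubmodule.lie_le_inf I J (LieSubmodule.lie_mem_lie hx hy)
  rwa [hIJ.eq_bot, LieSubmodule.mem_bot] at this

theorem LieModule.commute_toEnd_of_lie_eq_zero {x y : L} (hxy : ⁅x, y⁆ = 0) :
    Commute (toEnd K L V x) (toEnd K L V y) :=
  LinearMap.ext fun v => by simpa [hxy, sub_eq_zero, eq_comm] using lie_lie x y v

end LieAlgebra

theorem isIrreducible_sumElim_toEnd {K L V : Type*} [Field K] [LieRing L] [LieAlgebra K L]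
    [AddCommGroup V] [Module K V] [LieRingModule L V] [LieModule K L V] [Nontrivial V]
    {M N : LieIdeal K L} (hMN : M ⊔ N = ⊤)
    (hV : ∀ U : Submodule K V, (∀ x : L, ∀ u ∈ U, ⁅x, u⁆ ∈ U) → U = ⊥ ∨ U = ⊤) :
    EndFamily.IsIrreducible (Sum.elim (fun m : M => LieModule.toEnd K L V m)
      (fun n : N => LieModule.toEnd K L V n)) := by
  refine ⟨inferInstance, fun U hU => hV U fun x u hu => ?_⟩
  obtain ⟨m, hm, n, hn, rfl⟩ := (LieSubmodule.mem_sup M N x).1 (hMN ▸ LieSubmodule.mem_top x)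
  rw [add_lie]
  exact add_mem (hU (.inl ⟨m, hm⟩) u hu) (hU (.inr ⟨n, hn⟩) u hu)

theorem tensor_decomposition_general
    {K : Type} [Field K] [IsAlgClosed K]
    {L : Type} [LieRing L] [LieAlgebra K L]
    {V : Type} [AddCommGroup V] [Module K V] [FiniteDimensional K V]
    [LieRingModule L V] [LieModule K L V]
    (M N : LieIdeal K L) (hMN : IsCompl M N)
    (hVnt : Nontrivial V)
    (hVsimple : ∀ U : Submodule K V, (∀ x : L, ∀ u ∈ U, ⁅x, u⁆ ∈ U) → U = ⊥ ∨ U = ⊤) :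
    ∃ S : Submodule K V,
      -- `S` is a simple `M`-submodule of `V`
      LieIdealInvariant M S ∧ S ≠ ⊥ ∧
      (∀ U : Submodule K V, U ≤ S → LieIdealInvariant M U → U = ⊥ ∨ U = S) ∧
      -- a simple `N`-module `T = K^d` via a representation `σ`
      ∃ (d : ℕ) (σ : L → Module.End K (Fin d → K)), 0 < d ∧
        (∀ U : Submodule K (Fin d → K),
          (∀ n ∈ N, ∀ u ∈ U, σ n u ∈ U) → U = ⊥ ∨ U = ⊤) ∧
      -- `V ≅ S ⊗ T` as `L`-modules
      ∃ (ρ : L → Module.End K S) (e : V ≃ₗ[K] (S ⊗[K] (Fin d → K))),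
        (∀ m ∈ M, ∀ s : S, ((ρ m s : S) : V) = ⁅m, (s : V)⁆) ∧
        (∀ m ∈ M, ∀ v : V, e ⁅m, v⁆ = TensorProduct.map (ρ m) LinearMap.id (e v)) ∧
        (∀ n ∈ N, ∀ v : V, e ⁅n, v⁆ = TensorProduct.map LinearMap.id (σ n) (e v)) := by
  classical
  obtain ⟨S, hS, d, σ, hσ, e, heM, heN⟩ := EndFamily.exists_tensor_decomposition
    (fun m n => LieModule.commute_toEnd_of_lie_eq_zero
      (LieIdeal.lie_eq_zero_of_disjoint hMN.disjoint m.2 n.2))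
    (isIrreducible_sumElim_toEnd hMN.sup_eq_top hVsimple)
  have hd : 0 < d := Nat.pos_of_ne_zero (by rintro rfl; exact not_nontrivial _ hσ.nontrivial)
  refine ⟨S, fun m hm => hS.1.2 ⟨m, hm⟩, hS.1.1,
    fun U hUS hU => EndFamily.eq_bot_or_eq_of_minimal hS hUS fun m => hU m m.2,
    d, fun x => if hx : x ∈ N then σ ⟨x, hx⟩ else 0, hd, fun U hU => ?_,
    fun x => if hx : x ∈ M then EndFamily.restrict _ hS.1.2 ⟨x, hx⟩ else 0, e,
    fun m hm s => ?_, fun m hm v => ?_, fun n hn v => ?_⟩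
  · exact hσ.eq_bot_or_eq_top U fun n u hu => by simpa [n.2] using hU n n.2 u hu
  · simp [hm, EndFamily.restrict]
  · simpa [hm] using heM ⟨m, hm⟩ v
  · simpa [hn] using heN ⟨n, hn⟩ v

/-- Over an algebraically closed field of characteristic `0`: if `L = M ⊕ N` is a direct
sum of ideals with `M` minimal and `V` is a finite-dimensional simple `L`-module, then
there are a simple `M`-submodule `S ≤ V` and a simple `N`-module `T` with
`V ≅ S ⊗ T` as `L`-modules, `M` acting on the first factor and `N` on the second. -/
theorem tensor_decomposition
    {K : Type} [Field K] [IsAlgClosed K] [CharZero K]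
    {L : Type} [LieRing L] [LieAlgebra K L] [FiniteDimensional K L]
    {V : Type} [AddCommGroup V] [Module K V] [FiniteDimensional K V]
    [LieRingModule L V] [LieModule K L V]
    (M N : LieIdeal K L) (hMN : IsCompl M N)
    (hMne : M ≠ ⊥) (hMmin : ∀ I : LieIdeal K L, I ≤ M → I = ⊥ ∨ I = M)
    (hVnt : Nontrivial V)
    (hVsimple : ∀ U : Submodule K V, (∀ x : L, ∀ u ∈ U, ⁅x, u⁆ ∈ U) → U = ⊥ ∨ U = ⊤) :
    ∃ S : Submodule K V,
      -- `S` is a simple `M`-submodule of `V`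
      LieIdealInvariant M S ∧ S ≠ ⊥ ∧
      (∀ U : Submodule K V, U ≤ S → LieIdealInvariant M U → U = ⊥ ∨ U = S) ∧
      -- a simple `N`-module `T = K^d` via a representation `σ`
      ∃ (d : ℕ) (σ : L → Module.End K (Fin d → K)), 0 < d ∧
        (∀ U : Submodule K (Fin d → K),
          (∀ n ∈ N, ∀ u ∈ U, σ n u ∈ U) → U = ⊥ ∨ U = ⊤) ∧
      -- `V ≅ S ⊗ T` as `L`-modules
      ∃ (ρ : L → Module.End K S) (e : V ≃ₗ[K] (S ⊗[K] (Fin d → K))),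
        (∀ m ∈ M, ∀ s : S, ((ρ m s : S) : V) = ⁅m, (s : V)⁆) ∧
        (∀ m ∈ M, ∀ v : V, e ⁅m, v⁆ = TensorProduct.map (ρ m) LinearMap.id (e v)) ∧
        (∀ n ∈ N, ∀ v : V, e ⁅n, v⁆ = TensorProduct.map LinearMap.id (σ n) (e v)) :=
  tensor_decomposition_general M N hMN hVnt hVsimple
end
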